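/- arXiv:2405.10578 — 10 statements merged into one kernel-verified Lean document; each statement's English description precedes it below -/
import Mathlib

section
/- Let n be an odd natural number and let M be an n×n real matrix. Then the matrix M² has a nonnegative real eigenvalue, i.e., there exists t : ℝ with t ≥ 0 such that t lies in the spectrum of M² over ℝ. In particular, it is not the case that every eigenvalue of M² (i.e., every element of the spectrum over ℂ of the complexification of M²) has strictly negative real part. -/
open Polynomial Filter

/-- Membership in the spectrum of a matrix over a field is equivalent to being a root of the
characteristic polynomial. -/
lemma aux_mem_spectrum_iff_charpoly {K : Type*} [Field K] {m : ℕ}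
    (A : Matrix (Fin m) (Fin m) K) (t : K) :
    t ∈ spectrum K A ↔ A.charpoly.eval t = 0 := by
  have h : A.charpoly.eval t = (algebraMap K (Matrix (Fin m) (Fin m) K) t - A).det := by
    rw [Matrix.charpoly, _root_.eval_det, Matrix.matPolyEquiv_charmatrix, eval_sub, eval_X, eval_C]
    rfl
  rw [spectrum.mem_iff, Matrix.isUnit_iff_isUnit_det, isUnit_iff_ne_zero, not_ne_iff, h]

/-- A monic real polynomial of odd degree has a real root. -/
lemma aux_exists_root_of_odd (p : ℝ[X]) (hp : p.Monic) (h : Odd p.natDegree) :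
    ∃ x : ℝ, p.IsRoot x := by
  have hdeg0 : p.natDegree ≠ 0 := by
    rintro h0; rw [h0] at h; simp [Nat.odd_iff] at h
  have hdeg : 0 < p.degree := natDegree_pos_iff_degree_pos.mp (Nat.pos_of_ne_zero hdeg0)
  have htop : Tendsto (fun x => eval x p) atTop atTop :=
    p.tendsto_atTop_of_leadingCoeff_nonneg hdeg (by rw [hp.leadingCoeff]; norm_num)
  -- consider q(x) = p(-x)
  set q : ℝ[X] := p.comp (-X) with hq
  have hqdeg : q.natDegree = p.natDegree := by
    rw [hq, natDegree_comp]; simp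
  have hqlc : q.leadingCoeff = -1 := by
    rw [hq, leadingCoeff_comp (by simp [hdeg0])]
    have : (-X : ℝ[X]).leadingCoeff = -1 := by
      simp [leadingCoeff]
    rw [hp.leadingCoeff, this, h.neg_one_pow]
    ring
  have hqdegpos : 0 < q.degree := by
    rw [← natDegree_pos_iff_degree_pos, hqdeg]
    exact Nat.pos_of_ne_zero hdeg0
  have hbot : Tendsto (fun x => eval x q) atTop atBot :=
    q.tendsto_atBot_of_leadingCoeff_nonpos hqdegpos (by rw [hqlc]; norm_num)
  obtain ⟨b, hb⟩ := (htop.eventually (eventually_ge_atTop (0 : ℝ))).exists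
  obtain ⟨a, ha⟩ := (hbot.eventually (eventually_le_atBot (0 : ℝ))).exists
  have ha' : eval (-a) p ≤ 0 := by
    have : eval a q = eval (-a) p := by simp [hq]
    linarith [this ▸ ha]
  have : (0 : ℝ) ∈ Set.Icc (eval (-a) p) (eval b p) := ⟨ha', hb⟩
  obtain ⟨x, hx⟩ := intermediate_value_univ (-a) b (p.continuous_aeval) this
  exact ⟨x, by simpa [Polynomial.IsRoot] using hx⟩

/-- Odd-dimensional part of the paper's Theorem 1: if `n` is odd, then `M ^ 2` has a
nonnegative real eigenvalue; in particular, not every complex eigenvalue of the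
complexification of `M ^ 2` has strictly negative real part. -/
theorem odd_dim_not_jacobi_stable (n : ℕ) (hn : Odd n) (M : Matrix (Fin n) (Fin n) ℝ) :
    (∃ t : ℝ, 0 ≤ t ∧ t ∈ spectrum ℝ (M ^ 2)) ∧
    ¬ (∀ μ ∈ spectrum ℂ ((M ^ 2).map Complex.ofReal), μ.re < 0) := by
  have hnpos : 0 < n := hn.pos
  have : Nonempty (Fin n) := ⟨⟨0, hnpos⟩⟩
  -- M has a real eigenvalue since its characteristic polynomial has odd degree
  have hdeg : M.charpoly.natDegree = n := by
    rw [Matrix.charpoly_natDegree_eq_dim, Fintype.card_fin]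
  obtain ⟨lam, hlam⟩ := aux_exists_root_of_odd M.charpoly M.charpoly_monic (hdeg.symm ▸ hn)
  have hspec : lam ∈ spectrum ℝ M := (aux_mem_spectrum_iff_charpoly M lam).mpr hlam
  have hsq : lam ^ 2 ∈ spectrum ℝ (M ^ 2) :=
    spectrum.pow_image_subset M 2 ⟨lam, hspec, rfl⟩
  refine ⟨⟨lam ^ 2, sq_nonneg lam, hsq⟩, fun hall => ?_⟩
  -- transfer to the complexification
  have hC : ((lam ^ 2 : ℝ) : ℂ) ∈ spectrum ℂ ((M ^ 2).map Complex.ofReal) := by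
    rw [aux_mem_spectrum_iff_charpoly]
    have h1 : (M ^ 2).map Complex.ofReal = (M ^ 2).map (Complex.ofRealHom : ℝ →+* ℂ) := rfl
    rw [h1, Matrix.charpoly_map, Polynomial.eval_map]
    show eval₂ Complex.ofRealHom (Complex.ofRealHom (lam ^ 2)) (M ^ 2).charpoly = 0
    rw [Polynomial.eval₂_at_apply,
      (aux_mem_spectrum_iff_charpoly (M ^ 2) (lam ^ 2)).mp hsq, map_zero]
  have := hall _ hC
  rw [Complex.ofReal_re] at this
  exact absurd this (not_lt.mpr (sq_nonneg lam))
end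

section
/- Let n ≥ 1 and let M be an n×n real matrix with complexification Mℂ. Then every eigenvalue μ of M² (i.e., every μ in the spectrum over ℂ of Mℂ²) satisfies Re μ < 0 if and only if every eigenvalue λ of M (i.e., every λ in the spectrum over ℂ of Mℂ) satisfies (Re λ)² < (Im λ)². (In particular the latter condition forces every eigenvalue of M to be non-real.) -/
/-- Paper's Theorem 1 + Lemma 1: all eigenvalues of `M ^ 2` have negative real part
iff every eigenvalue `λ` of `M` satisfies `(Re λ)² < (Im λ)²`. -/
theorem sq_spectrum_neg_re_iff (n : ℕ) (hn : 1 ≤ n) (M : Matrix (Fin n) (Fin n) ℝ) :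
    (∀ μ ∈ spectrum ℂ ((M.map Complex.ofReal) ^ 2), μ.re < 0) ↔
    (∀ lam ∈ spectrum ℂ (M.map Complex.ofReal), lam.re ^ 2 < lam.im ^ 2) := by
  rw [spectrum.map_pow_of_pos (M.map Complex.ofReal) (by norm_num : 0 < 2)]
  constructor
  · intro h lam hlam
    have := h (lam ^ 2) ⟨lam, hlam, rfl⟩
    simp only [sq, Complex.mul_re] at this ⊢
    nlinarith
  · rintro h μ ⟨lam, hlam, rfl⟩
    have := h lam hlam
    simp only [sq, Complex.mul_re]
    nlinarith
end

section
/- Let m be a natural number and let p be a monic real polynomial of degree 2m. Then every complex root λ of p (i.e., of the image of p in ℂ[X] under Complex.ofReal) satisfies (Re λ)² < (Im λ)² if and only if there exist real numbers b₁, …, b_m and c₁, …, c_m such that p = ∏_{j=1}^{m} (X² + bⱼ·X + cⱼ) in ℝ[X] and 2cⱼ − bⱼ² > 0 for every j = 1, …, m. -/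
open Polynomial

lemma quad_monic (b c : ℝ) : (X ^ 2 + C b * X + C c : ℝ[X]).Monic := by
  have h : (X ^ 2 + C b * X + C c : ℝ[X]) = X ^ 2 + (C b * X + C c) := by ring
  rw [h]
  apply monic_X_pow_add
  exact lt_of_le_of_lt degree_linear_le (by norm_num)

lemma quad_map_eq (z : ℂ) :
    ((X ^ 2 + C (-(2 * z.re)) * X + C (z.re ^ 2 + z.im ^ 2) : ℝ[X]).map
      (algebraMap ℝ ℂ)) = (X - C z) * (X - C ((starRingEnd ℂ) z)) := by
  have h1 : ((algebraMap ℝ ℂ) (-(2 * z.re))) = -(z + (starRingEnd ℂ) z) := by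
    rw [Complex.coe_algebraMap, Complex.add_conj]; push_cast; ring
  have h2 : ((algebraMap ℝ ℂ) (z.re ^ 2 + z.im ^ 2)) = z * (starRingEnd ℂ) z := by
    rw [Complex.mul_conj]
    have : Complex.normSq z = z.re ^ 2 + z.im ^ 2 := by
      rw [Complex.normSq_apply]; ring
    rw [this, Complex.coe_algebraMap]
  simp only [Polynomial.map_add, Polynomial.map_mul, Polynomial.map_pow,
    Polynomial.map_X, Polynomial.map_C]
  rw [h1, h2]
  simp only [map_neg, map_add, C_mul]
  ring

lemma forward_aux : ∀ (m : ℕ) (p : Polynomial ℝ), p.Monic → p.natDegree = 2 * m →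
    (∀ lam : ℂ, (p.map (algebraMap ℝ ℂ)).IsRoot lam → lam.re ^ 2 < lam.im ^ 2) →
    ∃ b c : Fin m → ℝ,
      p = ∏ j : Fin m, (X ^ 2 + C (b j) * X + C (c j)) ∧
      ∀ j : Fin m, 2 * c j - (b j) ^ 2 > 0 := by
  intro m
  induction m with
  | zero =>
    intro p hmon hdeg _
    refine ⟨Fin.elim0, Fin.elim0, ?_, fun j => j.elim0⟩
    simp only [Finset.univ_eq_empty, Finset.prod_empty]
    exact hmon.natDegree_eq_zero.mp (by simpa using hdeg)
  | succ n ih =>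
    intro p hmon hdeg hroots
    set P := p.map (algebraMap ℝ ℂ) with hP
    have hPmon : P.Monic := hmon.map _
    have hPdeg : P.natDegree = 2 * (n + 1) := by
      rw [hP, natDegree_map]; exact hdeg
    have hPdegpos : 0 < P.degree := by
      rw [degree_eq_natDegree hPmon.ne_zero, hPdeg]
      exact_mod_cast Nat.succ_le_succ (Nat.zero_le _)
    obtain ⟨z, hz⟩ := Complex.exists_root hPdegpos
    have hzlt : z.re ^ 2 < z.im ^ 2 := hroots z hz
    have hzc : P.IsRoot ((starRingEnd ℂ) z) := by
      have : (aeval z) p = 0 := by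
        rw [aeval_def, ← eval_map]; exact hz
      have hc : (aeval ((starRingEnd ℂ) z)) p = 0 := by
        rw [Polynomial.aeval_conj, this, map_zero]
      rwa [aeval_def, ← eval_map] at hc
    have hne : z ≠ (starRingEnd ℂ) z := by
      intro h
      have : z.im = 0 := by
        have := congrArg Complex.im h
        simp at this
        linarith
      rw [this] at hzlt
      nlinarith [sq_nonneg z.re]
    set q : ℝ[X] := X ^ 2 + C (-(2 * z.re)) * X + C (z.re ^ 2 + z.im ^ 2) with hq
    have hqdvd : q ∣ p := by
      rw [← map_dvd_map' (algebraMap ℝ ℂ), quad_map_eq]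
      refine IsCoprime.mul_dvd ?_ (dvd_iff_isRoot.mpr hz) (dvd_iff_isRoot.mpr hzc)
      exact isCoprime_X_sub_C_of_isUnit_sub (isUnit_iff_ne_zero.mpr (sub_ne_zero.mpr hne))
    obtain ⟨r, hr⟩ := hqdvd
    have hqmon : q.Monic := quad_monic _ _
    have hrmon : r.Monic := hqmon.of_mul_monic_left (hr ▸ hmon)
    have hqdeg : q.natDegree = 2 := by
      have : (q : ℝ[X]) = C 1 * X ^ 2 + C (-(2 * z.re)) * X + C (z.re ^ 2 + z.im ^ 2) := by
        simp [hq]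
      rw [this]; exact natDegree_quadratic one_ne_zero
    have hrdeg : r.natDegree = 2 * n := by
      have hd : p.natDegree = q.natDegree + r.natDegree := by
        rw [hr, natDegree_mul hqmon.ne_zero hrmon.ne_zero]
      omega
    have hrroots : ∀ lam : ℂ, (r.map (algebraMap ℝ ℂ)).IsRoot lam → lam.re ^ 2 < lam.im ^ 2 := by
      intro w hw
      apply hroots
      have hPe : P = (q.map (algebraMap ℝ ℂ)) * (r.map (algebraMap ℝ ℂ)) := by
        rw [hP, hr, Polynomial.map_mul]
      show eval w P = 0
      rw [hPe, eval_mul, hw, mul_zero]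
    obtain ⟨b', c', hfact, hpos⟩ := ih r hrmon hrdeg hrroots
    refine ⟨Fin.cons (-(2 * z.re)) b', Fin.cons (z.re ^ 2 + z.im ^ 2) c', ?_, ?_⟩
    · rw [Fin.prod_univ_succ]
      simp only [Fin.cons_zero, Fin.cons_succ]
      rw [hr, hfact]
    · intro j
      refine Fin.cases ?_ ?_ j
      · simp only [Fin.cons_zero]; nlinarith [hzlt]
      · intro i; simpa using hpos i

-- backward root fact
lemma root_quad (b c : ℝ) (h : 2 * c - b ^ 2 > 0) (z : ℂ)
    (hz : z ^ 2 + (b : ℂ) * z + (c : ℂ) = 0) : z.re ^ 2 < z.im ^ 2 := by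
  have hre := congrArg Complex.re hz
  have him := congrArg Complex.im hz
  simp [pow_two, Complex.add_re, Complex.add_im, Complex.mul_re, Complex.mul_im] at hre him
  rcases eq_or_ne z.im 0 with hy | hy
  · exfalso; rw [hy] at hre; nlinarith [sq_nonneg (2 * z.re + b)]
  · have h2 : 2 * z.re + b = 0 := by
      rcases mul_eq_zero.mp (show z.im * (2 * z.re + b) = 0 by linarith [him]) with h' | h'
      · exact absurd h' hy
      · exact h'
    have hb : b = -(2 * z.re) := by linarith
    subst hb
    simp only [pow_two] at h ⊢
    nlinarith

open Polynomial in
/-- Factorization lemma underlying the paper's Proposition 1: a monic real polynomial of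
degree `2m` has all its complex roots `λ` satisfying `(Re λ)² < (Im λ)²` iff it factors
into real quadratics `X² + bⱼ X + cⱼ` with `2cⱼ − bⱼ² > 0`. -/
theorem monic_even_deg_roots_iff_quadratic_factorization (m : ℕ) (p : Polynomial ℝ)
    (hmon : p.Monic) (hdeg : p.natDegree = 2 * m) :
    (∀ lam : ℂ, (p.map (algebraMap ℝ ℂ)).IsRoot lam → lam.re ^ 2 < lam.im ^ 2) ↔
    ∃ b c : Fin m → ℝ,
      p = ∏ j : Fin m, (X ^ 2 + C (b j) * X + C (c j)) ∧
      ∀ j : Fin m, 2 * c j - (b j) ^ 2 > 0 := by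
  constructor
  · exact forward_aux m p hmon hdeg
  · rintro ⟨b, c, hfact, hpos⟩ lam hroot
    have hmap : p.map (algebraMap ℝ ℂ) =
        ∏ j : Fin m, (X ^ 2 + C ((algebraMap ℝ ℂ) (b j)) * X + C ((algebraMap ℝ ℂ) (c j))) := by
      rw [hfact, Polynomial.map_prod]
      simp only [Polynomial.map_add, Polynomial.map_mul, Polynomial.map_pow,
        Polynomial.map_X, Polynomial.map_C]
    rw [IsRoot, hmap, eval_prod] at hroot
    obtain ⟨j, -, hj⟩ := Finset.prod_eq_zero_iff.mp hroot
    simp only [eval_add, eval_mul, eval_pow, eval_X, eval_C, Complex.coe_algebraMap] at hj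
    exact root_quad (b j) (c j) (hpos j) lam hj
end

section
/- Let m ≥ 1 and let M be a 2m×2m real matrix with complexification Mℂ. Then every eigenvalue μ of M² (i.e., every μ in the spectrum over ℂ of Mℂ²) satisfies Re μ < 0 if and only if there exist real numbers b₁, …, b_m and c₁, …, c_m such that the characteristic polynomial of M factors in ℝ[X] as charpoly(M) = ∏_{j=1}^{m} (X² + bⱼ·X + cⱼ) with 2cⱼ − bⱼ² > 0 for every j = 1, …, m. -/
open Polynomial

private lemma quad_root_re_sq_neg {b c : ℝ} (h : 2 * c - b ^ 2 > 0) {z : ℂ}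
    (hz : z ^ 2 + (b : ℂ) * z + (c : ℂ) = 0) : (z ^ 2).re < 0 := by
  have hre : z.re * z.re - z.im * z.im + b * z.re + c = 0 := by
    have := congrArg Complex.re hz
    simpa [pow_two, Complex.mul_re] using this
  have him : z.im * (2 * z.re + b) = 0 := by
    have := congrArg Complex.im hz
    simp [pow_two, Complex.mul_im, Complex.mul_re] at this
    nlinarith [this]
  have hgoal : (z ^ 2).re = z.re * z.re - z.im * z.im := by
    simp [pow_two, Complex.mul_re]
  rw [hgoal]
  rcases mul_eq_zero.mp him with h1 | h1
  · nlinarith [sq_nonneg (2 * z.re + b), sq_nonneg b]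
  · have hb : b = -(2 * z.re) := by linarith
    rw [hb] at h hre
    nlinarith

private lemma mem_spectrum_iff_isRoot {n : Type*} [Fintype n] [DecidableEq n]
    (A : Matrix n n ℂ) (z : ℂ) : z ∈ spectrum ℂ A ↔ A.charpoly.IsRoot z := by
  rw [spectrum.mem_iff, Matrix.isUnit_iff_isUnit_det, isUnit_iff_ne_zero, not_ne_iff]
  have key : (algebraMap ℂ (Matrix n n ℂ) z - A).det = A.charpoly.eval z := by
    rw [Matrix.charpoly, Polynomial.eval, ← Polynomial.coe_eval₂RingHom, RingHom.map_det]
    congr 1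
    ext i j
    by_cases h : i = j
    · subst h
      simp [Matrix.charmatrix_apply_eq, Matrix.algebraMap_matrix_apply]
    · simp [Matrix.charmatrix_apply_ne _ _ _ h, Matrix.algebraMap_matrix_apply, h]
  rw [key, Polynomial.IsRoot]

private lemma factor_of_roots (m : ℕ) : ∀ p : ℝ[X], p.Monic → p.natDegree = 2 * m →
    (∀ z : ℂ, (p.map (algebraMap ℝ ℂ)).IsRoot z → (z ^ 2).re < 0) →
    ∃ b c : Fin m → ℝ, p = ∏ j : Fin m, (X ^ 2 + C (b j) * X + C (c j)) ∧
      ∀ j : Fin m, 2 * c j - (b j) ^ 2 > 0 := by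
  induction m with
  | zero =>
    intro p hp hdeg _
    refine ⟨Fin.elim0, Fin.elim0, ?_, fun j => j.elim0⟩
    simpa using (Polynomial.Monic.natDegree_eq_zero hp).mp hdeg
  | succ m ih =>
    intro p hp hdeg hroots
    have hmapmonic : (p.map (algebraMap ℝ ℂ)).Monic := hp.map _
    have hdegmap : (p.map (algebraMap ℝ ℂ)).natDegree = 2 * (m + 1) := by
      rw [hp.natDegree_map, hdeg]
    obtain ⟨z, hz⟩ : ∃ z : ℂ, (p.map (algebraMap ℝ ℂ)).IsRoot z := by
      apply Complex.exists_root
      rw [Polynomial.degree_eq_natDegree hmapmonic.ne_zero, hdegmap]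
      exact_mod_cast Nat.succ_le_iff.mp (by omega)
    have haev : aeval z p = 0 := by
      rwa [Polynomial.aeval_def, Polynomial.eval₂_eq_eval_map]
    have hlt := hroots z hz
    have him : z.im ≠ 0 := by
      intro h0
      have : (z ^ 2).re = z.re * z.re - z.im * z.im := by
        simp [pow_two, Complex.mul_re]
      rw [this, h0] at hlt
      nlinarith
    obtain ⟨r, hr⟩ := p.quadratic_dvd_of_aeval_eq_zero_im_ne_zero haev him
    set b0 : ℝ := -(2 * z.re) with hb0
    set c0 : ℝ := ‖z‖ ^ 2 with hc0
    set q : ℝ[X] := X ^ 2 + C b0 * X + C c0 with hqdef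
    have hq : q = X ^ 2 - C (2 * z.re) * X + C (‖z‖ ^ 2) := by
      rw [hqdef, hb0, hc0, map_neg]; ring
    have hqmonic : q.Monic := by
      rw [hqdef, add_assoc]
      apply Polynomial.monic_X_pow_add
      calc (C b0 * X + C c0).degree ≤ max (C b0 * X).degree (C c0).degree :=
            Polynomial.degree_add_le _ _
        _ ≤ max 1 0 := by
            apply max_le_max
            · calc (C b0 * X).degree ≤ (C b0).degree + X.degree := Polynomial.degree_mul_le _ _
                _ ≤ 0 + 1 := by
                    exact add_le_add Polynomial.degree_C_le (le_of_eq Polynomial.degree_X)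
                _ = 1 := by norm_num
            · exact Polynomial.degree_C_le
        _ < 2 := by norm_num
    rw [← hq] at hr
    obtain ⟨r, rfl⟩ := hr
    have hrmonic : r.Monic := hqmonic.of_mul_monic_left hp
    have hqdeg : q.natDegree = 2 := by
      rw [hqdef]
      compute_degree!
    have hrdeg : r.natDegree = 2 * m := by
      have hmul := hqmonic.natDegree_mul hrmonic
      rw [hdeg, hqdeg] at hmul
      omega
    have hrroots : ∀ w : ℂ, (r.map (algebraMap ℝ ℂ)).IsRoot w → (w ^ 2).re < 0 := by
      intro w hw
      apply hroots
      rw [Polynomial.map_mul, Polynomial.IsRoot, Polynomial.eval_mul]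
      rw [Polynomial.IsRoot] at hw
      rw [hw, mul_zero]
    obtain ⟨b, c, hfac, hbc⟩ := ih r hrmonic hrdeg hrroots
    refine ⟨Fin.cons b0 b, Fin.cons c0 c, ?_, ?_⟩
    · rw [Fin.prod_univ_succ]
      simp only [Fin.cons_zero, Fin.cons_succ]
      rw [← hqdef, ← hfac]
    · intro j
      refine Fin.cases ?_ ?_ j
      · simp only [Fin.cons_zero]
        have h2 : (z ^ 2).re = z.re * z.re - z.im * z.im := by
          simp [pow_two, Complex.mul_re]
        rw [h2] at hlt
        have hnorm : c0 = z.re ^ 2 + z.im ^ 2 := by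
          rw [hc0, Complex.sq_norm, Complex.normSq_apply]
          ring
        rw [hnorm, hb0]
        nlinarith
      · intro i
        simpa using hbc i

open Polynomial in
/-- Matrix form of the paper's Proposition 1: all eigenvalues of `M ^ 2` have negative
real part iff the characteristic polynomial of `M` factors into real quadratics
`X² + bⱼ X + cⱼ` with `2cⱼ − bⱼ² > 0`. -/
theorem sq_spectrum_neg_re_iff_charpoly_factorization (m : ℕ) (hm : 1 ≤ m)
    (M : Matrix (Fin (2 * m)) (Fin (2 * m)) ℝ) :
    (∀ μ ∈ spectrum ℂ ((M.map Complex.ofReal) ^ 2), μ.re < 0) ↔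
    ∃ b c : Fin m → ℝ,
      M.charpoly = ∏ j : Fin m, (X ^ 2 + C (b j) * X + C (c j)) ∧
      ∀ j : Fin m, 2 * c j - (b j) ^ 2 > 0 := by
  have hNE : Nonempty (Fin (2 * m)) := ⟨⟨0, by omega⟩⟩
  set A := M.map Complex.ofReal with hA
  have hchar : A.charpoly = M.charpoly.map (algebraMap ℝ ℂ) := by
    rw [hA]
    have : M.map Complex.ofReal = M.map (algebraMap ℝ ℂ) := rfl
    rw [this, Matrix.charpoly_map]
  have hspec : spectrum ℂ (A ^ 2) = (· ^ 2) '' spectrum ℂ A :=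
    spectrum.map_pow_of_pos A two_pos
  constructor
  · intro h
    apply factor_of_roots m M.charpoly M.charpoly_monic
      (by rw [M.charpoly_natDegree_eq_dim, Fintype.card_fin])
    intro z hz
    have hzs : z ∈ spectrum ℂ A := (mem_spectrum_iff_isRoot A z).mpr (by rwa [hchar])
    exact h _ (hspec ▸ ⟨z, hzs, rfl⟩)
  · rintro ⟨b, c, hfac, hbc⟩ μ hμ
    rw [hspec] at hμ
    obtain ⟨z, hz, rfl⟩ := hμ
    have hroot := (mem_spectrum_iff_isRoot A z).mp hz
    rw [hchar, hfac] at hroot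
    simp only [Polynomial.IsRoot, Polynomial.map_prod, Polynomial.map_add, Polynomial.map_pow,
      Polynomial.map_mul, Polynomial.map_X, Polynomial.map_C, Polynomial.eval_prod,
      Finset.prod_eq_zero_iff, Polynomial.eval_add, Polynomial.eval_pow, Polynomial.eval_mul,
      Polynomial.eval_X, Polynomial.eval_C] at hroot
    obtain ⟨j, -, hj⟩ := hroot
    exact quad_root_re_sq_neg (hbc j) (by exact_mod_cast hj)
end

section
/- Let M be a 2×2 real matrix with complexification Mℂ. Then every eigenvalue μ of M² (i.e., every μ in the spectrum over ℂ of Mℂ²) satisfies Re μ < 0 if and only if 2·det(M) − (trace(M))² > 0. -/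
open Matrix Complex

lemma mem_spec_iff (M : Matrix (Fin 2) (Fin 2) ℝ) (μ : ℂ) :
    μ ∈ spectrum ℂ ((M.map Complex.ofReal) ^ 2) ↔
    μ ^ 2 - ((M.trace : ℂ) ^ 2 - 2 * (M.det : ℂ)) * μ + (M.det : ℂ) ^ 2 = 0 := by
  rw [spectrum.mem_iff, Matrix.isUnit_iff_isUnit_det, isUnit_iff_ne_zero, not_ne_iff]
  have : ((algebraMap ℂ (Matrix (Fin 2) (Fin 2) ℂ)) μ - (M.map Complex.ofReal) ^ 2).det
      = μ ^ 2 - ((M.trace : ℂ) ^ 2 - 2 * (M.det : ℂ)) * μ + (M.det : ℂ) ^ 2 := by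
    simp [Matrix.det_fin_two, Matrix.trace_fin_two, pow_two, Matrix.mul_apply,
      Fin.sum_univ_two, Matrix.map_apply, Matrix.algebraMap_matrix_apply, Matrix.sub_apply]
    ring
  rw [this]

/-- Two-dimensional Jacobi stability criterion: for a real 2×2 matrix `M`, all eigenvalues
of `M ^ 2` have negative real part iff `2 det M − (trace M)² > 0`. -/
theorem two_dim_jacobi_stability_criterion (M : Matrix (Fin 2) (Fin 2) ℝ) :
    (∀ μ ∈ spectrum ℂ ((M.map Complex.ofReal) ^ 2), μ.re < 0) ↔
    2 * M.det - M.trace ^ 2 > 0 := by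
  simp only [mem_spec_iff]
  set t := M.trace with ht
  set d := M.det with hd
  constructor
  · intro h
    by_contra hle
    push_neg at hle
    have hT : (0:ℝ) ≤ t ^ 2 - 2 * d := by linarith
    by_cases h4 : 0 ≤ t ^ 2 * (t ^ 2 - 4 * d)
    · set s := Real.sqrt (t ^ 2 * (t ^ 2 - 4 * d)) with hs
      have hs2 : s ^ 2 = t ^ 2 * (t ^ 2 - 4 * d) := Real.sq_sqrt h4
      have hsnn : 0 ≤ s := Real.sqrt_nonneg _
      have hs2' : ((s:ℂ)) ^ 2 = (t:ℂ) ^ 2 * ((t:ℂ) ^ 2 - 4 * (d:ℂ)) := by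
        rw [← Complex.ofReal_pow, hs2]; push_cast; ring
      have hroot : ((((t ^ 2 - 2 * d + s) / 2 : ℝ)) : ℂ) ^ 2 -
          ((t : ℂ) ^ 2 - 2 * (d : ℂ)) * (((t ^ 2 - 2 * d + s) / 2 : ℝ) : ℂ) + (d : ℂ) ^ 2 = 0 := by
        push_cast
        linear_combination hs2' / 4
      have := h _ hroot
      simp only [Complex.ofReal_re] at this
      linarith
    · push_neg at h4
      set s := Real.sqrt (-(t ^ 2 * (t ^ 2 - 4 * d))) with hs
      have hs2 : s ^ 2 = -(t ^ 2 * (t ^ 2 - 4 * d)) := Real.sq_sqrt (by linarith)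
      have hs2' : ((s:ℂ)) ^ 2 = -((t:ℂ) ^ 2 * ((t:ℂ) ^ 2 - 4 * (d:ℂ))) := by
        rw [← Complex.ofReal_pow, hs2]; push_cast; ring
      set μ : ℂ := (((t ^ 2 - 2 * d) / 2 : ℝ) : ℂ) + ((s / 2 : ℝ) : ℂ) * Complex.I with hμ
      have hroot : μ ^ 2 - ((t : ℂ) ^ 2 - 2 * (d : ℂ)) * μ + (d : ℂ) ^ 2 = 0 := by
        rw [hμ]
        push_cast
        linear_combination ((s:ℂ) ^ 2 / 4) * Complex.I_sq - hs2' / 4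
      have h2 := h _ hroot
      have hre : μ.re = (t ^ 2 - 2 * d) / 2 := by simp [hμ, ← Complex.ofReal_pow]
      rw [hre] at h2
      linarith
  · intro h μ hμ
    have hd0 : 0 < d := by nlinarith [sq_nonneg t]
    have hdisc : t ^ 2 * (t ^ 2 - 4 * d) ≤ 0 := by nlinarith [sq_nonneg t]
    set z : ℂ := μ - (((t ^ 2 - 2 * d) / 2 : ℝ) : ℂ) with hz
    have hz2 : z ^ 2 = ((t ^ 2 * (t ^ 2 - 4 * d) / 4 : ℝ) : ℂ) := by
      rw [hz]; push_cast; linear_combination hμ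
    have hre : μ.re = z.re + (t ^ 2 - 2 * d) / 2 := by
      simp [hz, ← Complex.ofReal_pow]
    rw [Complex.ext_iff] at hz2
    simp only [pow_two, Complex.mul_re, Complex.mul_im, Complex.ofReal_re, Complex.ofReal_im] at hz2
    obtain ⟨h1, h2⟩ := hz2
    have hz0 : z.re = 0 := by
      rcases mul_eq_zero.mp (by linarith : z.re * z.im = 0) with h' | h'
      · exact h'
      · nlinarith
    rw [hre, hz0]
    linarith
end

section
/- Let a, b be real numbers with a > 0 and b > 0, and suppose R₀ := (a−b)² − 2b + 1 < 0. Then the Brusselator system has at least one Jacobi stable fixed point: there exist real numbers x, y with 1 − (b+1)x + a·x²·y = 0 and b·x − a·x²·y = 0 such that every eigenvalue μ (in the spectrum over ℂ) of the square of the complexified Jacobian matrix J(x,y) = [[2a·x·y − b − 1, a·x²], [−2a·x·y + b, −a·x²]] satisfies Re μ < 0. -/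
lemma quad_root_re_neg (R D : ℝ) (hR : R < 0) (hD : 0 < D) (μ : ℂ)
    (h : μ ^ 2 - (R : ℂ) * μ + (D : ℂ) = 0) : μ.re < 0 := by
  set p := μ.re with hp
  set q := μ.im with hq
  have hre : p ^ 2 - q ^ 2 - R * p + D = 0 := by
    have := congrArg Complex.re h
    simpa [pow_two, Complex.mul_re, Complex.mul_im, ← hp, ← hq] using this
  have him : 2 * p * q - R * q = 0 := by
    have := congrArg Complex.im h
    have h2 := this
    simp [pow_two, Complex.mul_re, Complex.mul_im, ← hp, ← hq] at h2
    nlinarith [h2]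
  by_contra hcon
  push_neg at hcon
  have hq2 : q * (2 * p * q - R * q) = 0 := by rw [him]; ring
  have : q ^ 2 = 0 := by nlinarith [sq_nonneg q, sq_nonneg p]
  have hq0 : q = 0 := by nlinarith [sq_nonneg q]
  nlinarith [sq_nonneg p]

/-- Paper's Theorem 4: if `R₀ = (a−b)² − 2b + 1 < 0`, the Brusselator model has at least
one Jacobi stable fixed point. -/
theorem brusselator_exists_jacobi_stable (a b : ℝ) (ha : 0 < a) (hb : 0 < b)
    (hR : (a - b) ^ 2 - 2 * b + 1 < 0) :
    ∃ x y : ℝ,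
      1 - (b + 1) * x + a * x ^ 2 * y = 0 ∧
      b * x - a * x ^ 2 * y = 0 ∧
      ∀ μ ∈ spectrum ℂ
        (((!![2 * a * x * y - b - 1, a * x ^ 2;
              -2 * a * x * y + b, -a * x ^ 2]).map Complex.ofReal) ^ 2),
        μ.re < 0 := by
  have ha' : a ≠ 0 := ne_of_gt ha
  refine ⟨1, b / a, by field_simp; ring, by field_simp; ring, ?_⟩
  have hM : (!![2 * a * 1 * (b / a) - b - 1, a * 1 ^ 2;
              -(2 * a * 1 * (b / a)) + b, -(a * 1 ^ 2)] : Matrix (Fin 2) (Fin 2) ℝ)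
      = !![b - 1, a; -b, -a] := by
    ext i j
    fin_cases i <;> fin_cases j <;> simp <;> field_simp <;> ring
  intro μ hμ
  rw [show (-2 : ℝ) * a * 1 * (b / a) + b = -(2 * a * 1 * (b / a)) + b by ring,
    show -a * (1:ℝ) ^ 2 = -(a * 1 ^ 2) by ring, hM] at hμ
  rw [spectrum.mem_iff, Matrix.isUnit_iff_isUnit_det] at hμ
  have hdet : ((algebraMap ℂ (Matrix (Fin 2) (Fin 2) ℂ)) μ -
      ((!![b - 1, a; -b, -a] : Matrix (Fin 2) (Fin 2) ℝ).map Complex.ofReal) ^ 2).det = 0 := by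
    by_contra h
    exact hμ (isUnit_iff_ne_zero.mpr h)
  have hmap : ((!![b - 1, a; -b, -a] : Matrix (Fin 2) (Fin 2) ℝ).map Complex.ofReal)
      = !![(b : ℂ) - 1, a; -b, -a] := by
    ext i j
    fin_cases i <;> fin_cases j <;> simp
  rw [hmap] at hdet
  have hquad : μ ^ 2 - (((a - b) ^ 2 - 2 * b + 1 : ℝ) : ℂ) * μ + (((a ^ 2 : ℝ)) : ℂ) = 0 := by
    simp only [pow_two, Matrix.mul_fin_two] at hdet
    simp [Matrix.det_fin_two, Matrix.sub_apply, Matrix.algebraMap_matrix_apply] at hdet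
    push_cast
    linear_combination hdet
  have := quad_root_re_neg ((a - b) ^ 2 - 2 * b + 1) (a ^ 2) hR (by positivity) μ hquad
  simpa using this
end

section
/- Let a, b be real numbers with a > 0 and b > 0, and set R₀ := (a−b)² − 2b + 1. Then the Brusselator system has exactly one Jacobi stable fixed point if and only if R₀ < 0; that is, there exists a unique pair (x, y) ∈ ℝ² satisfying 1 − (b+1)x + a·x²·y = 0, b·x − a·x²·y = 0, and the condition that every eigenvalue μ (in the spectrum over ℂ) of the square of the complexified Jacobian J(x,y) = [[2a·x·y − b − 1, a·x²], [−2a·x·y + b, −a·x²]] satisfies Re μ < 0, if and only if R₀ < 0. -/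
private lemma quad_iff (c d : ℝ) (hd : 0 < d) :
    (∀ μ : ℂ, μ ^ 2 - c * μ + d = 0 → μ.re < 0) ↔ c < 0 := by
  constructor
  · intro h
    rcases le_or_gt (4 * d) (c ^ 2) with hdisc | hdisc
    · set s := Real.sqrt (c ^ 2 - 4 * d) with hs
      have hs2 : s ^ 2 = c ^ 2 - 4 * d := Real.sq_sqrt (by linarith)
      have hsnn : 0 ≤ s := Real.sqrt_nonneg _
      have key : (s : ℂ) ^ 2 = (c : ℂ) ^ 2 - 4 * d := by exact_mod_cast congrArg Complex.ofReal hs2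
      have hroot := h (((c + s) / 2 : ℝ) : ℂ) (by push_cast; linear_combination (1/4 : ℂ) * key)
      simp only [Complex.ofReal_re] at hroot
      linarith
    · set t := Real.sqrt (4 * d - c ^ 2) with ht
      have ht2 : t ^ 2 = 4 * d - c ^ 2 := Real.sq_sqrt (by linarith)
      have key : (t : ℂ) ^ 2 = 4 * d - (c : ℂ) ^ 2 := by exact_mod_cast congrArg Complex.ofReal ht2
      have hroot := h (((c / 2 : ℝ) : ℂ) + ((t / 2 : ℝ) : ℂ) * Complex.I) ?_
      · simp only [Complex.add_re, Complex.ofReal_re, Complex.mul_re, Complex.I_re,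
          Complex.I_im, Complex.ofReal_im] at hroot
        linarith
      · push_cast
        linear_combination ((t : ℂ) ^ 2 / 4) * Complex.I_sq - (1/4 : ℂ) * key
  · intro hc μ hμ
    rw [Complex.ext_iff] at hμ
    simp only [Complex.add_re, Complex.sub_re, Complex.add_im, Complex.sub_im, pow_two,
      Complex.mul_re, Complex.mul_im, Complex.ofReal_re, Complex.ofReal_im,
      Complex.zero_re, Complex.zero_im] at hμ
    obtain ⟨h1, h2⟩ := hμ
    have h2' : μ.im * (2 * μ.re - c) = 0 := by linarith
    rcases mul_eq_zero.mp h2' with h | h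
    · rw [h] at h1
      nlinarith [sq_nonneg μ.re]
    · linarith

private lemma spec_iff (a b : ℝ) (ha : 0 < a) (μ : ℂ) :
    μ ∈ spectrum ℂ (((!![b - 1, a; -b, -a] : Matrix (Fin 2) (Fin 2) ℝ).map Complex.ofReal) ^ 2) ↔
    μ ^ 2 - (((a - b) ^ 2 - 2 * b + 1 : ℝ) : ℂ) * μ + ((a ^ 2 : ℝ) : ℂ) = 0 := by
  have hmap : ((!![b - 1, a; -b, -a] : Matrix (Fin 2) (Fin 2) ℝ).map Complex.ofReal)
      = !![(b : ℂ) - 1, a; -b, -a] := by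
    ext i j; fin_cases i <;> fin_cases j <;> simp
  rw [hmap, pow_two, Matrix.mul_fin_two]
  rw [spectrum.mem_iff, Matrix.isUnit_iff_isUnit_det, isUnit_iff_ne_zero, not_ne_iff]
  have halg : (algebraMap ℂ (Matrix (Fin 2) (Fin 2) ℂ)) μ = !![μ, 0; 0, μ] := by
    ext i j; fin_cases i <;> fin_cases j <;>
      simp [Matrix.algebraMap_matrix_apply]
  rw [halg]
  have hsub : (!![μ, 0; 0, μ] -
      !![((b:ℂ) - 1) * ((b:ℂ) - 1) + (a:ℂ) * (-(b:ℂ)), ((b:ℂ) - 1) * (a:ℂ) + (a:ℂ) * (-(a:ℂ));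
         -(b:ℂ) * ((b:ℂ) - 1) + (-(a:ℂ)) * (-(b:ℂ)), -(b:ℂ) * (a:ℂ) + (-(a:ℂ)) * (-(a:ℂ))])
      = !![μ - (((b:ℂ) - 1) * ((b:ℂ) - 1) + (a:ℂ) * (-(b:ℂ))),
            -(((b:ℂ) - 1) * (a:ℂ) + (a:ℂ) * (-(a:ℂ)));
            -(-(b:ℂ) * ((b:ℂ) - 1) + (-(a:ℂ)) * (-(b:ℂ))),
            μ - (-(b:ℂ) * (a:ℂ) + (-(a:ℂ)) * (-(a:ℂ)))] := by
    ext i j; fin_cases i <;> fin_cases j <;> simp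
  rw [hsub, Matrix.det_fin_two_of]
  constructor <;> intro h <;> [skip; skip] <;> (push_cast at h ⊢; linear_combination h)

/-- Paper's Theorem 5: the Brusselator model has exactly one Jacobi stable fixed point
iff `R₀ = (a−b)² − 2b + 1 < 0`. -/
theorem brusselator_unique_jacobi_stable_iff (a b : ℝ) (ha : 0 < a) (hb : 0 < b) :
    (∃! p : ℝ × ℝ,
      1 - (b + 1) * p.1 + a * p.1 ^ 2 * p.2 = 0 ∧
      b * p.1 - a * p.1 ^ 2 * p.2 = 0 ∧
      ∀ μ ∈ spectrum ℂ
        (((!![2 * a * p.1 * p.2 - b - 1, a * p.1 ^ 2;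
              -2 * a * p.1 * p.2 + b, -a * p.1 ^ 2]).map Complex.ofReal) ^ 2),
        μ.re < 0) ↔
    (a - b) ^ 2 - 2 * b + 1 < 0 := by
  have hfix : ∀ p : ℝ × ℝ, 1 - (b + 1) * p.1 + a * p.1 ^ 2 * p.2 = 0 →
      b * p.1 - a * p.1 ^ 2 * p.2 = 0 → p = (1, b / a) := by
    rintro ⟨x, y⟩ e1 e2
    simp only at e1 e2
    have hx : x = 1 := by nlinarith
    subst hx
    have hy : y = b / a := by field_simp; nlinarith
    simp [hy]
  have hM : (!![2 * a * (1 : ℝ) * (b / a) - b - 1, a * (1:ℝ) ^ 2;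
      -2 * a * (1:ℝ) * (b / a) + b, -a * (1:ℝ) ^ 2]) = !![b - 1, a; -b, -a] := by
    ext i j
    fin_cases i <;> fin_cases j <;> simp <;> field_simp <;> ring
  constructor
  · rintro ⟨p, ⟨e1, e2, hspec⟩, -⟩
    have hp := hfix p e1 e2
    subst hp
    simp only [hM] at hspec
    exact (quad_iff _ (a ^ 2) (by positivity)).mp
      (fun μ hμ => hspec μ ((spec_iff a b ha μ).mpr hμ))
  · intro hR
    refine ⟨(1, b / a), ⟨?_, ?_, ?_⟩, fun p hp => hfix p hp.1 hp.2.1⟩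
    · show 1 - (b + 1) * 1 + a * 1 ^ 2 * (b / a) = 0; field_simp; ring
    · show b * 1 - a * 1 ^ 2 * (b / a) = 0; field_simp; ring
    · simp only [hM]
      intro μ hμ
      exact (quad_iff _ (a ^ 2) (by positivity)).mpr hR μ ((spec_iff a b ha μ).mp hμ)
end

section
/- Let a, b be real numbers with a > 0 and b > 0, and suppose R₀ := (a−b)² − 2b + 1 > 0. Then the Brusselator system has no Jacobi stable fixed point: there is no pair (x, y) ∈ ℝ² satisfying 1 − (b+1)x + a·x²·y = 0, b·x − a·x²·y = 0, and the condition that every eigenvalue μ (in the spectrum over ℂ) of the square of the complexified Jacobian J(x,y) = [[2a·x·y − b − 1, a·x²], [−2a·x·y + b, −a·x²]] satisfies Re μ < 0. -/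
/-- A complex number is in the spectrum of a 2×2 matrix if the characteristic
determinant vanishes. -/
lemma mem_spectrum_of_det_eq_zero (M : Matrix (Fin 2) (Fin 2) ℂ) (μ : ℂ)
    (h : (algebraMap ℂ (Matrix (Fin 2) (Fin 2) ℂ) μ - M).det = 0) :
    μ ∈ spectrum ℂ M := by
  rw [spectrum.mem_iff, Matrix.isUnit_iff_isUnit_det, isUnit_iff_ne_zero]
  simpa using h

/-- Paper's Theorem 5 (no-fixed-point part): if `R₀ = (a−b)² − 2b + 1 > 0`, the
Brusselator model has no Jacobi stable fixed point. -/
theorem brusselator_no_jacobi_stable (a b : ℝ) (ha : 0 < a) (hb : 0 < b)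
    (hR : (a - b) ^ 2 - 2 * b + 1 > 0) :
    ¬ ∃ x y : ℝ,
      1 - (b + 1) * x + a * x ^ 2 * y = 0 ∧
      b * x - a * x ^ 2 * y = 0 ∧
      ∀ μ ∈ spectrum ℂ
        (((!![2 * a * x * y - b - 1, a * x ^ 2;
              -2 * a * x * y + b, -a * x ^ 2]).map Complex.ofReal) ^ 2),
        μ.re < 0 := by
  rintro ⟨x, y, h1, h2, hspec⟩
  have hx : x = 1 := by linear_combination -h1 - h2
  subst hx
  have hy : a * y = b := by linear_combination -h2
  have hyc : (a : ℂ) * y = b := by exact_mod_cast hy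
  set R : ℝ := (a - b) ^ 2 - 2 * b + 1 with hRdef
  -- rewrite the matrix
  have hMeq : ((!![2 * a * 1 * y - b - 1, a * 1 ^ 2;
              -2 * a * 1 * y + b, -a * 1 ^ 2]).map Complex.ofReal)
      = !![(b : ℂ) - 1, a; -b, -a] := by
    ext i j
    fin_cases i <;> fin_cases j <;> simp [Matrix.map_apply] <;> push_cast <;>
      first
        | linear_combination (2 : ℂ) * hyc
        | linear_combination (-2 : ℂ) * hyc
  rw [hMeq] at hspec
  -- characteristic relation: μ² - R μ + a² = 0 implies μ ∈ spectrum of the square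
  have key : ∀ μ : ℂ, μ ^ 2 - (R : ℂ) * μ + (a : ℂ) ^ 2 = 0 →
      μ ∈ spectrum ℂ ((!![(b : ℂ) - 1, a; -b, -a]) ^ 2) := by
    intro μ hμ
    apply mem_spectrum_of_det_eq_zero
    have hsq : (!![(b : ℂ) - 1, a; -b, -a]) ^ 2 =
        !![((b:ℂ)-1)^2 - a*b, ((b:ℂ)-1)*a - a*a;
           -b*((b:ℂ)-1) + a*b, -(b:ℂ)*a + a*a] := by
      rw [pow_two]
      ext i j
      fin_cases i <;> fin_cases j <;>
        simp [Matrix.mul_apply, Fin.sum_univ_two] <;> ring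
    rw [hsq, Matrix.det_fin_two]
    simp [Matrix.algebraMap_matrix_apply]
    push_cast [hRdef] at hμ ⊢
    linear_combination hμ
  -- find a bad eigenvalue
  rcases le_or_gt 0 (R ^ 2 - 4 * a ^ 2) with hD | hD
  · -- real eigenvalue (R + √D)/2 ≥ R/2 > 0
    set s := Real.sqrt (R ^ 2 - 4 * a ^ 2) with hs
    have hs2 : s ^ 2 = R ^ 2 - 4 * a ^ 2 := Real.sq_sqrt hD
    have hs2c : (s : ℂ) ^ 2 = (R : ℂ) ^ 2 - 4 * (a : ℂ) ^ 2 := by exact_mod_cast hs2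
    have hsnn : 0 ≤ s := Real.sqrt_nonneg _
    have hμmem := key (((R + s) / 2 : ℝ) : ℂ) (by
      push_cast
      linear_combination (1 / 4 : ℂ) * hs2c)
    have := hspec _ hμmem
    rw [Complex.ofReal_re] at this
    nlinarith
  · -- complex eigenvalue (R + i√(-D))/2 with real part R/2 > 0
    set s := Real.sqrt (4 * a ^ 2 - R ^ 2) with hs
    have hs2 : s ^ 2 = 4 * a ^ 2 - R ^ 2 := Real.sq_sqrt (by linarith)
    have hs2c : (s : ℂ) ^ 2 = 4 * (a : ℂ) ^ 2 - (R : ℂ) ^ 2 := by exact_mod_cast hs2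
    have hμmem := key (((R : ℂ) + s * Complex.I) / 2) (by
      linear_combination ((s : ℂ) ^ 2 / 4) * Complex.I_sq - (1 / 4 : ℂ) * hs2c)
    have := hspec _ hμmem
    simp [Complex.div_re, Complex.add_re, Complex.mul_re, Complex.normSq] at this
    nlinarith [this]
end

section
/- Let n ≥ 1 and let f : (Fin n → ℝ) → (Fin n → ℝ) be twice continuously differentiable (ContDiff ℝ 2). For x, y : Fin n → ℝ write J(x) for the Jacobian matrix with entries J(x)ᵢₖ = ∂fᵢ/∂xₖ(x), define Gᵢ(x, y) = −(1/2)·Σₖ J(x)ᵢₖ·yₖ, N(x)ᵢⱼ = −(1/2)·J(x)ᵢⱼ, and define the deviation curvature tensor P(x, y)ᵢⱼ = −2·∂Gᵢ/∂xⱼ(x, y) + Σₗ yₗ·∂N(·)ᵢⱼ/∂xₗ(x) + Σₗ N(x)ᵢₗ·N(x)ₗⱼ. Then for all x, y, i, j: P(x, y)ᵢⱼ = (1/2)·Σₗ (∂²fᵢ/∂xⱼ∂xₗ)(x)·yₗ + (1/4)·(J(x)·J(x))ᵢⱼ. In particular, P(x, 0) = (1/4)·J(x)² as matrices. -/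
/-- Computational core of the paper's Lemma 1: for a `C²` vector field `f` with Jacobian
`J`, KCC coefficients `Gᵢ(x,y) = −(1/2)Σₖ J(x)ᵢₖ yₖ`, nonlinear connection
`N(x)ᵢⱼ = −(1/2) J(x)ᵢⱼ`, and deviation curvature tensor
`P(x,y)ᵢⱼ = −2 ∂Gᵢ/∂xⱼ + Σₗ yₗ ∂Nᵢⱼ/∂xₗ + Σₗ N(x)ᵢₗ N(x)ₗⱼ`, we have
`P(x,y)ᵢⱼ = (1/2) Σₗ (∂²fᵢ/∂xⱼ∂xₗ)(x) yₗ + (1/4)(J(x)·J(x))ᵢⱼ`;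
in particular `P(x,0) = (1/4) J(x)²` as matrices. -/
theorem deviation_curvature_eq (n : ℕ) (hn : 1 ≤ n)
    (f : (Fin n → ℝ) → (Fin n → ℝ)) (hf : ContDiff ℝ 2 f)
    (J : (Fin n → ℝ) → Matrix (Fin n) (Fin n) ℝ)
    (hJ : ∀ x i k, J x i k = fderiv ℝ f x (Pi.single k 1) i)
    (G : (Fin n → ℝ) → (Fin n → ℝ) → Fin n → ℝ)
    (hG : ∀ x y i, G x y i = -(1 / 2) * ∑ k, J x i k * y k)
    (N : (Fin n → ℝ) → Matrix (Fin n) (Fin n) ℝ)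
    (hN : ∀ x i j, N x i j = -(1 / 2) * J x i j)
    (P : (Fin n → ℝ) → (Fin n → ℝ) → Matrix (Fin n) (Fin n) ℝ)
    (hP : ∀ x y i j, P x y i j =
      -2 * fderiv ℝ (fun x' => G x' y i) x (Pi.single j 1)
      + ∑ l, y l * fderiv ℝ (fun x' => N x' i j) x (Pi.single l 1)
      + ∑ l, N x i l * N x l j) :
    (∀ x y i j, P x y i j =
      (1 / 2) * ∑ l, fderiv ℝ (fun x' => fderiv ℝ f x' (Pi.single j 1) i) x (Pi.single l 1) * y l
      + (1 / 4) * (J x * J x) i j) ∧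
    ∀ x, P x 0 = (1 / 4 : ℝ) • (J x * J x) := by
  classical
  set F : (Fin n → ℝ) → ((Fin n → ℝ) →L[ℝ] (Fin n → ℝ)) := fun x' => fderiv ℝ f x' with hFdef
  have hdf : Differentiable ℝ f := hf.differentiable (by norm_num)
  have hdF : Differentiable ℝ F :=
    (hf.fderiv_right (m := 1) (by norm_num)).differentiable (by norm_num)
  -- derivative of evaluated Jacobian entries
  have key : ∀ (x v : Fin n → ℝ) (i : Fin n),
      HasFDerivAt (fun x' => F x' v i)
        (((ContinuousLinearMap.proj i).comp
          (ContinuousLinearMap.apply ℝ (Fin n → ℝ) v)).comp (fderiv ℝ F x)) x := by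
    intro x v i
    exact (((ContinuousLinearMap.proj (R := ℝ) (φ := fun _ : Fin n => ℝ) i).comp
      (ContinuousLinearMap.apply ℝ (Fin n → ℝ) v)).hasFDerivAt).comp x (hdF x).hasFDerivAt
  have keyval : ∀ (x v w : Fin n → ℝ) (i : Fin n),
      fderiv ℝ (fun x' => F x' v i) x w = fderiv ℝ F x w v i := by
    intro x v w i
    rw [(key x v i).fderiv]
    rfl
  have symm : ∀ (x v w : Fin n → ℝ), fderiv ℝ F x v w = fderiv ℝ F x w v := by
    intro x v w
    exact second_derivative_symmetric (fun y => (hdf y).hasFDerivAt) (hdF x).hasFDerivAt v w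
  -- derivative of G
  have hGder : ∀ (x y : Fin n → ℝ) (i j : Fin n),
      fderiv ℝ (fun x' => G x' y i) x (Pi.single j 1)
        = -(1 / 2) * ∑ k, fderiv ℝ F x (Pi.single j 1) (Pi.single k 1) i * y k := by
    intro x y i j
    have hfun : (fun x' => G x' y i)
        = fun x' => -(1 / 2) * ∑ k, F x' (Pi.single k 1) i * y k := by
      funext x'
      rw [hG]
      congr 1
      exact Finset.sum_congr rfl fun k _ => by rw [hJ]
    have hd : HasFDerivAt (fun x' => -(1 / 2 : ℝ) * ∑ k, F x' (Pi.single k 1) i * y k)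
        ((-(1 / 2 : ℝ)) • ∑ k, (y k) • (((ContinuousLinearMap.proj i).comp
          (ContinuousLinearMap.apply ℝ (Fin n → ℝ) (Pi.single k 1))).comp (fderiv ℝ F x))) x :=
      (HasFDerivAt.fun_sum fun k _ => (key x (Pi.single k 1) i).mul_const (y k)).const_mul _
    rw [hfun, hd.fderiv]
    simp only [ContinuousLinearMap.smul_apply, ContinuousLinearMap.sum_apply, smul_eq_mul]
    congr 1
    exact Finset.sum_congr rfl fun k _ => by
      rw [mul_comm]; rfl
  -- derivative of N
  have hNder : ∀ (x : Fin n → ℝ) (i j l : Fin n),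
      fderiv ℝ (fun x' => N x' i j) x (Pi.single l 1)
        = -(1 / 2) * fderiv ℝ F x (Pi.single l 1) (Pi.single j 1) i := by
    intro x i j l
    have hfun : (fun x' => N x' i j) = fun x' => -(1 / 2) * F x' (Pi.single j 1) i := by
      funext x'
      rw [hN, hJ]
    have hd : HasFDerivAt (fun x' => -(1 / 2 : ℝ) * F x' (Pi.single j 1) i)
        ((-(1 / 2 : ℝ)) • (((ContinuousLinearMap.proj i).comp
          (ContinuousLinearMap.apply ℝ (Fin n → ℝ) (Pi.single j 1))).comp (fderiv ℝ F x))) x :=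
      (key x (Pi.single j 1) i).const_mul _
    rw [hfun, hd.fderiv]
    simp only [ContinuousLinearMap.smul_apply, smul_eq_mul]
    rfl
  have main : ∀ x y i j, P x y i j =
      (1 / 2) * ∑ l, fderiv ℝ (fun x' => fderiv ℝ f x' (Pi.single j 1) i) x (Pi.single l 1) * y l
      + (1 / 4) * (J x * J x) i j := by
    intro x y i j
    rw [hP, hGder]
    have hsum2 : ∑ l, y l * fderiv ℝ (fun x' => N x' i j) x (Pi.single l 1)
        = -(1 / 2) * ∑ l, fderiv ℝ F x (Pi.single l 1) (Pi.single j 1) i * y l := by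
      rw [Finset.mul_sum]
      exact Finset.sum_congr rfl fun l _ => by rw [hNder]; ring
    have hsum3 : ∑ l, N x i l * N x l j = (1 / 4) * (J x * J x) i j := by
      rw [Matrix.mul_apply, Finset.mul_sum]
      exact Finset.sum_congr rfl fun l _ => by rw [hN, hN]; ring
    have hsum1 : ∑ k, fderiv ℝ F x (Pi.single j 1) (Pi.single k 1) i * y k
        = ∑ k, fderiv ℝ F x (Pi.single k 1) (Pi.single j 1) i * y k :=
      Finset.sum_congr rfl fun k _ => by rw [congrFun (symm x (Pi.single j 1) (Pi.single k 1)) i]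
    have htgt : ∑ l, fderiv ℝ (fun x' => fderiv ℝ f x' (Pi.single j 1) i) x (Pi.single l 1) * y l
        = ∑ l, fderiv ℝ F x (Pi.single l 1) (Pi.single j 1) i * y l :=
      Finset.sum_congr rfl fun l _ => by rw [keyval]
    rw [hsum2, hsum3, hsum1, htgt]
    ring
  refine ⟨main, fun x => ?_⟩
  ext i j
  rw [Matrix.smul_apply, main x 0 i j]
  simp
end

section
/- Let k₂ > 0 be a real number. Then the Cdc2-cyclin B/Wee1 system with Hill coefficients γ₁ = γ₂ = 1 has no Jacobi stable fixed point: there is no pair (x, y) ∈ ℝ² with 30 + 24y ≠ 0 and k₂ + x ≠ 0 such that 1 − x − 4800·x·y/(30 + 24y) = 0, 1 − y − 10·x·y/(k₂ + x) = 0, and every eigenvalue μ (in the spectrum over ℂ) of the square of the complexified Jacobian J(x,y) = [[−1 − 4800y/(30 + 24y), −144000x/(30 + 24y)²], [−10·k₂·y/(k₂ + x)², −1 − 10x/(k₂ + x)]] satisfies Re μ < 0. -/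
open Matrix

/-- A real `2×2` matrix with nonnegative off-diagonal product has a real eigenvalue,
hence its complexified square has an eigenvalue with nonnegative real part. -/
lemma key_real_eig (a b c d : ℝ) (hbc : 0 ≤ b * c) :
    ∃ μ ∈ spectrum ℂ (((!![a, b; c, d]).map Complex.ofReal) ^ 2), 0 ≤ μ.re := by
  set s := Real.sqrt ((a - d) ^ 2 + 4 * (b * c)) with hs_def
  have hs : s ^ 2 = (a - d) ^ 2 + 4 * (b * c) := by
    rw [hs_def, Real.sq_sqrt]; positivity
  set l : ℝ := (a + d + s) / 2 with hl_def
  have hlam : (l - a) * (l - d) - b * c = 0 := by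
    rw [hl_def]; nlinarith [hs]
  set M : Matrix (Fin 2) (Fin 2) ℂ := (!![a, b; c, d]).map Complex.ofReal with hM
  have hMeq : M = !![(a : ℂ), b; c, d] := by
    rw [hM]; ext i j; fin_cases i <;> fin_cases j <;> simp
  have hdet1 : ((l : ℂ) • (1 : Matrix (Fin 2) (Fin 2) ℂ) - M).det = 0 := by
    rw [hMeq]
    have : (l : ℂ) • (1 : Matrix (Fin 2) (Fin 2) ℂ) - !![(a : ℂ), b; c, d] =
        !![(l : ℂ) - a, -b; -c, (l : ℂ) - d] := by
      ext i j; fin_cases i <;> fin_cases j <;> simp [Matrix.one_apply]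
    rw [this, Matrix.det_fin_two_of]
    have := congrArg (Complex.ofReal) hlam
    push_cast at this
    linear_combination this
  refine ⟨((l : ℂ)) ^ 2, ?_, by rw [← Complex.ofReal_pow, Complex.ofReal_re]; positivity⟩
  rw [spectrum.mem_iff]
  intro hU
  rw [Matrix.isUnit_iff_isUnit_det, isUnit_iff_ne_zero] at hU
  apply hU
  have comm : ∀ (x : ℂ) (N : Matrix (Fin 2) (Fin 2) ℂ),
      (x • 1 - N) * (x • 1 + N) = (x ^ 2) • 1 - N ^ 2 := by
    intro x N
    noncomm_ring
    simp only [smul_add, smul_smul, smul_neg, neg_smul, one_smul]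
    abel
  have hfact : algebraMap ℂ (Matrix (Fin 2) (Fin 2) ℂ) ((l : ℂ) ^ 2) - M ^ 2 =
      ((l : ℂ) • 1 - M) * ((l : ℂ) • 1 + M) := by
    rw [Algebra.algebraMap_eq_smul_one, comm]
  rw [hfact, Matrix.det_mul, hdet1, zero_mul]

/-- Paper's Theorem 6, Case 1 (`γ₁ = γ₂ = 1`): the Cdc2-cyclin B/Wee1 system has no
Jacobi stable fixed point. -/
theorem cdc2_wee1_case1_no_jacobi_stable (k₂ : ℝ) (hk : 0 < k₂) :
    ¬ ∃ x y : ℝ, 30 + 24 * y ≠ 0 ∧ k₂ + x ≠ 0 ∧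
      1 - x - 4800 * x * y / (30 + 24 * y) = 0 ∧
      1 - y - 10 * x * y / (k₂ + x) = 0 ∧
      ∀ μ ∈ spectrum ℂ
        (((!![-1 - 4800 * y / (30 + 24 * y), -144000 * x / (30 + 24 * y) ^ 2;
              -10 * k₂ * y / (k₂ + x) ^ 2, -1 - 10 * x / (k₂ + x)]).map Complex.ofReal) ^ 2),
        μ.re < 0 := by
  rintro ⟨x, y, hP, hQ, h1, h2, hstab⟩
  -- clear denominators in the fixed point equations
  have e1 : (1 - x) * (30 + 24 * y) = 4800 * x * y := by
    rw [sub_eq_zero, eq_div_iff hP] at h1; linarith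
  have e2 : (1 - y) * (k₂ + x) = 10 * x * y := by
    field_simp at h2; linarith
  -- the product x * y is positive at any fixed point
  have hxy : 0 < x * y := by
    by_contra h
    push_neg at h
    rcases mul_nonpos_iff.mp h with ⟨hx, hy⟩ | ⟨hx, hy⟩
    · nlinarith
    · nlinarith
  -- hence the off-diagonal product of the Jacobian is nonnegative
  have hbc : 0 ≤ (-144000 * x / (30 + 24 * y) ^ 2) * (-10 * k₂ * y / (k₂ + x) ^ 2) := by
    have heq : (-144000 * x / (30 + 24 * y) ^ 2) * (-10 * k₂ * y / (k₂ + x) ^ 2) =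
        (1440000 * k₂ * (x * y)) / ((30 + 24 * y) ^ 2 * (k₂ + x) ^ 2) := by
      field_simp; ring
    rw [heq]
    apply div_nonneg
    · nlinarith
    · positivity
  obtain ⟨μ, hμ, hre⟩ := key_real_eig (-1 - 4800 * y / (30 + 24 * y))
    (-144000 * x / (30 + 24 * y) ^ 2) (-10 * k₂ * y / (k₂ + x) ^ 2)
    (-1 - 10 * x / (k₂ + x)) hbc
  exact absurd (hstab μ hμ) (not_lt.mpr hre)
end
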